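/- In the group 𝕃(p), the dualizing element ω = (t−2)·c − Σ_{i=1}^t x_i has finite order if and only if the Euler characteristic χ = 2 − Σ_{i=1}^t (1 − 1/p_i) equals 0; and in that case the order of ω in 𝕃(p) is exactly p = lcm(p_1,…,p_t). -/

import Mathlib

open scoped TensorProduct

/-- The subgroup of relations `p_i • x_i − c` defining `𝕃(p)` inside the free
abelian group on the generators `x_1,…,x_t` (indexed by `Fin t`) and `c`
(indexed by `Unit`). -/
def Lrel (t : ℕ) (p : Fin t → ℕ) : AddSubgroup (FreeAbelianGroup (Fin t ⊕ Unit)) :=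
  AddSubgroup.closure
    {g | ∃ i : Fin t, g = (p i) • FreeAbelianGroup.of (Sum.inl i) -
        FreeAbelianGroup.of (Sum.inr ())}

/-- The group `𝕃(p)`, presented by generators `x_1,…,x_t,c` and relations
`p_1 x_1 = ⋯ = p_t x_t = c`. -/
abbrev LGroup (t : ℕ) (p : Fin t → ℕ) :=
  FreeAbelianGroup (Fin t ⊕ Unit) ⧸ Lrel t p

/-- The generator `x_i` of `𝕃(p)`. -/
def Lx (t : ℕ) (p : Fin t → ℕ) (i : Fin t) : LGroup t p :=
  QuotientAddGroup.mk (FreeAbelianGroup.of (Sum.inl i))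

/-- The canonical element `c` of `𝕃(p)`. -/
def Lc (t : ℕ) (p : Fin t → ℕ) : LGroup t p :=
  QuotientAddGroup.mk (FreeAbelianGroup.of (Sum.inr ()))

/-!
The degree map `𝕃(p) → ℚ`, `x_i ↦ 1/p_i`, `c ↦ 1`, sends `ω` to `-χ`, so `ω` can only be
torsion when `χ = 0`. Conversely, for `L = lcm p` each `L x_i` is the multiple `(L/p_i) c`, so
`L ω = -Lχ • c` vanishes when `χ = 0`. Finally, the map `𝕃(p) → ℤ/p_i` reading off the
coefficient of `x_i` sends `ω` to `-1`, so every `p_i` divides the order of `ω`.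
-/

namespace LGroup

variable {t : ℕ} {p : Fin t → ℕ}

def omega (t : ℕ) (p : Fin t → ℕ) : LGroup t p := ((t : ℤ) - 2) • Lc t p - ∑ i, Lx t p i

def eulerChar (p : Fin t → ℕ) : ℚ := 2 - ∑ i, (1 - 1 / (p i : ℚ))

def lift {A : Type*} [AddCommGroup A] (f : Fin t ⊕ Unit → A)
    (hf : ∀ i, p i • f (.inl i) = f (.inr ())) : LGroup t p →+ A :=
  QuotientAddGroup.lift (Lrel t p) (FreeAbelianGroup.lift f) <| by
    rw [Lrel, AddSubgroup.closure_le]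
    rintro g ⟨i, rfl⟩
    simp [hf i]

section lift

variable {A : Type*} [AddCommGroup A] (f : Fin t ⊕ Unit → A)
  (hf : ∀ i, p i • f (.inl i) = f (.inr ()))

@[simp] lemma lift_Lx (i : Fin t) : lift f hf (Lx t p i) = f (.inl i) := by
  simp [lift, Lx]

@[simp] lemma lift_Lc : lift f hf (Lc t p) = f (.inr ()) := by
  simp [lift, Lc]

end lift

lemma nsmul_Lx (i : Fin t) : p i • Lx t p i = Lc t p := by
  have hrel : p i • FreeAbelianGroup.of (Sum.inl i) - FreeAbelianGroup.of (Sum.inr ()) ∈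
      Lrel t p :=
    AddSubgroup.subset_closure ⟨i, rfl⟩
  rw [Lx, Lc, ← QuotientAddGroup.mk_nsmul, QuotientAddGroup.eq, neg_add_eq_sub, ← neg_sub]
  exact neg_mem hrel

lemma nsmul_Lx_of_dvd {L : ℕ} {i : Fin t} (h : p i ∣ L) :
    L • Lx t p i = (L / p i) • Lc t p := by
  rw [← nsmul_Lx i, smul_smul, Nat.div_mul_cancel h]

lemma nsmul_omega_of_forall_dvd {L : ℕ} (hL : ∀ i, p i ∣ L) :
    L • omega t p = (((t : ℤ) - 2) * L - ∑ i, ((L / p i : ℕ) : ℤ)) • Lc t p := by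
  simp only [omega, smul_sub, Finset.smul_sum, nsmul_Lx_of_dvd (hL _), sub_smul, Finset.sum_smul,
    natCast_zsmul, mul_comm _ (L : ℤ), mul_smul]

lemma cast_omega_coeff (L : ℕ) (hL : ∀ i, p i ∣ L) :
    ((((t : ℤ) - 2) * L - ∑ i, ((L / p i : ℕ) : ℤ) : ℤ) : ℚ) = -L * eulerChar p := by
  have hdiv : ∀ i, (((L / p i : ℕ) : ℤ) : ℚ) = L * (1 / p i) := fun i => by
    rw [Int.cast_natCast, Nat.cast_div_charZero (hL i), mul_one_div]
  simp only [Int.cast_sub, Int.cast_mul, Int.cast_sum, Int.cast_natCast, Int.cast_ofNat, hdiv,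
    ← Finset.mul_sum, eulerChar, Finset.sum_sub_distrib, Finset.sum_const, Finset.card_univ,
    Fintype.card_fin, nsmul_eq_mul, mul_one]
  ring

lemma nsmul_omega_eq_zero {L : ℕ} (hL : ∀ i, p i ∣ L) (hχ : eulerChar p = 0) :
    L • omega t p = 0 := by
  have hcoeff : ((t : ℤ) - 2) * L - ∑ i, ((L / p i : ℕ) : ℤ) = 0 :=
    Int.cast_eq_zero (α := ℚ) |>.mp <| (cast_omega_coeff L hL).trans (by rw [hχ, mul_zero])
  rw [nsmul_omega_of_forall_dvd hL, hcoeff, zero_smul]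

def degree (hp : ∀ i, p i ≠ 0) : LGroup t p →+ ℚ :=
  lift (Sum.elim (fun i => 1 / (p i : ℚ)) fun _ => 1) fun i => by
    simp [nsmul_eq_mul, hp i]

lemma degree_omega (hp : ∀ i, p i ≠ 0) : degree hp (omega t p) = -eulerChar p := by
  simp only [degree, omega, eulerChar, map_sub, map_zsmul, map_sum, lift_Lc, lift_Lx, Sum.elim_inl,
    Sum.elim_inr, zsmul_eq_mul, Int.cast_sub, Int.cast_natCast, Int.cast_ofNat, mul_one,
    Finset.sum_sub_distrib, Finset.sum_const, Finset.card_univ, Fintype.card_fin, nsmul_eq_mul]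
  ring

lemma eulerChar_eq_zero_of_isOfFinAddOrder (hp : ∀ i, p i ≠ 0)
    (h : IsOfFinAddOrder (omega t p)) : eulerChar p = 0 := by
  have := (degree hp).isOfFinAddOrder h
  rw [degree_omega] at this
  exact neg_eq_zero.mp this.eq_zero'

lemma dvd_addOrderOf_omega (i : Fin t) : p i ∣ addOrderOf (omega t p) := by
  let ψ : LGroup t p →+ ZMod (p i) :=
    lift (Sum.elim (fun j => if j = i then 1 else 0) fun _ => 0) fun j => by
      by_cases h : j = i
      · subst h; simp
      · simp [h]
  have hψ : ψ (omega t p) = -1 := by simp [ψ, omega]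
  have h : addOrderOf (omega t p) • ψ (omega t p) = 0 := by
    rw [← map_nsmul, addOrderOf_nsmul_eq_zero, map_zero]
  rw [hψ, nsmul_eq_mul, mul_neg_one, neg_eq_zero] at h
  exact (ZMod.natCast_eq_zero_iff _ _).mp h

end LGroup

theorem omega_finite_order_iff_general (t : ℕ)
    (p : Fin t → ℕ) (hp : ∀ i, 0 < p i) :
    (IsOfFinAddOrder (((t : ℤ) - 2) • Lc t p - ∑ i, Lx t p i) ↔
      (2 : ℚ) - ∑ i, (1 - 1 / (p i : ℚ)) = 0) ∧
    ((2 : ℚ) - ∑ i, (1 - 1 / (p i : ℚ)) = 0 →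
      addOrderOf (((t : ℤ) - 2) • Lc t p - ∑ i, Lx t p i) =
        Finset.univ.lcm p) := by
  change (IsOfFinAddOrder (LGroup.omega t p) ↔ LGroup.eulerChar p = 0) ∧
    (LGroup.eulerChar p = 0 → addOrderOf (LGroup.omega t p) = Finset.univ.lcm p)
  have hp' : ∀ i, p i ≠ 0 := fun i => (hp i).ne'
  have hlcm : 0 < Finset.univ.lcm p :=
    Nat.pos_of_ne_zero <| Finset.lcm_ne_zero_iff.mpr fun i _ => hp' i
  have hdvd : ∀ i, p i ∣ Finset.univ.lcm p := fun i => Finset.dvd_lcm (Finset.mem_univ i)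
  refine ⟨⟨LGroup.eulerChar_eq_zero_of_isOfFinAddOrder hp', fun hχ => ?_⟩, fun hχ => ?_⟩
  · exact isOfFinAddOrder_iff_nsmul_eq_zero.mpr ⟨_, hlcm, LGroup.nsmul_omega_eq_zero hdvd hχ⟩
  · exact Nat.dvd_antisymm (addOrderOf_dvd_of_nsmul_eq_zero (LGroup.nsmul_omega_eq_zero hdvd hχ))
      (Finset.lcm_dvd fun i _ => LGroup.dvd_addOrderOf_omega i)

/-- The dualizing element `ω = (t−2) • c − ∑ i, x_i` of `𝕃(p)` has finite
(additive) order if and only if the Euler characteristic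
`χ = 2 − ∑ i (1 − 1/p_i)` is zero; in that case the order of `ω` is exactly
`p = lcm(p_1,…,p_t)`. -/
theorem omega_finite_order_iff (t : ℕ) (ht : 3 ≤ t)
    (p : Fin t → ℕ) (hp : ∀ i, 0 < p i) :
    (IsOfFinAddOrder (((t : ℤ) - 2) • Lc t p - ∑ i, Lx t p i) ↔
      (2 : ℚ) - ∑ i, (1 - 1 / (p i : ℚ)) = 0) ∧
    ((2 : ℚ) - ∑ i, (1 - 1 / (p i : ℚ)) = 0 →
      addOrderOf (((t : ℤ) - 2) • Lc t p - ∑ i, Lx t p i) =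
        Finset.univ.lcm p) :=
  omega_finite_order_iff_general t p hp
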